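/- arXiv:1302.3762 — 5 statements merged into one kernel-verified Lean document; each statement's English description precedes it below -/
import Mathlib

section
/- Let M be a symmetric real k×k matrix, and let P be an m×k matrix and Q an n×k matrix, and let N_P and N_Q be matrices whose columns span the kernels of P and Q respectively. If there exists an n×m matrix G such that M + Q^T G P + P^T G^T Q is negative definite, then N_P^T M N_P and N_Q^T M N_Q are both negative definite (assuming N_P and N_Q have full column rank). -/
/-! Since `P * NP = 0`, the congruence `NPᵀ * _ * NP` annihilates both `G`-terms, so it sends
`M + Qᵀ G P + Pᵀ Gᵀ Q` to `NPᵀ M NP`; a congruence by a matrix with trivial kernel preserves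
negative definiteness. The same holds with the roles of `P` and `Q` exchanged. -/

open Matrix

def Matrix.NegDef {n : Type*} [Fintype n] (M : Matrix n n ℝ) : Prop := (-M).PosDef

namespace Matrix

variable {R k l r : Type*} [Fintype k] [Fintype l] {X : Matrix l k R} {N : Matrix k r R}

theorem transpose_mul_mul_mul_eq_zero_of_mul_eq_zero [Semiring R] (hXN : X * N = 0)
    (Y : Matrix k l R) : Nᵀ * (Y * X) * N = 0 := by
  rw [Matrix.mul_assoc, Matrix.mul_assoc, hXN, Matrix.mul_zero, Matrix.mul_zero]

theorem transpose_mul_transpose_mul_mul_eq_zero_of_mul_eq_zero [CommSemiring R] [Fintype r]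
    (hXN : X * N = 0) (Z : Matrix l k R) : Nᵀ * (Xᵀ * Z) * N = 0 := by
  rw [← Matrix.mul_assoc, ← transpose_mul, hXN, transpose_zero, Matrix.zero_mul,
    Matrix.zero_mul]

theorem NegDef.transpose_mul_mul_same [Fintype r] {S : Matrix k k ℝ} (hS : S.NegDef)
    {N : Matrix k r ℝ} (hN : Function.Injective N.mulVec) : (Nᵀ * S * N).NegDef := by
  have := PosDef.conjTranspose_mul_mul_same hS hN
  rwa [conjTranspose_eq_transpose_of_trivial, Matrix.mul_neg, Matrix.neg_mul] at this

end Matrix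

theorem stmt1_general {k m n p q : ℕ} (M : Matrix (Fin k) (Fin k) ℝ)
    (P : Matrix (Fin m) (Fin k) ℝ) (Q : Matrix (Fin n) (Fin k) ℝ)
    (NP : Matrix (Fin k) (Fin p) ℝ) (NQ : Matrix (Fin k) (Fin q) ℝ)
    (hPNP : P * NP = 0) (hNPinj : Function.Injective NP.mulVec)
    (hQNQ : Q * NQ = 0) (hNQinj : Function.Injective NQ.mulVec)
    (hG : ∃ G : Matrix (Fin n) (Fin m) ℝ, (M + Qᵀ * G * P + Pᵀ * Gᵀ * Q).NegDef) :
    (NPᵀ * M * NP).NegDef ∧ (NQᵀ * M * NQ).NegDef := by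
  obtain ⟨G, hS⟩ := hG
  have compress : ∀ {r : ℕ} {N : Matrix (Fin k) (Fin r) ℝ}, Function.Injective N.mulVec →
      Nᵀ * (Qᵀ * G * P) * N = 0 → Nᵀ * (Pᵀ * Gᵀ * Q) * N = 0 → (Nᵀ * M * N).NegDef := by
    intro r N hN hQGP hPGQ
    simpa only [Matrix.mul_add, Matrix.add_mul, hQGP, hPGQ, add_zero] using
      hS.transpose_mul_mul_same hN
  constructor
  · refine compress hNPinj (transpose_mul_mul_mul_eq_zero_of_mul_eq_zero hPNP _) ?_
    rw [Matrix.mul_assoc Pᵀ]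
    exact transpose_mul_transpose_mul_mul_eq_zero_of_mul_eq_zero hPNP _
  · refine compress hNQinj ?_ (transpose_mul_mul_mul_eq_zero_of_mul_eq_zero hQNQ _)
    rw [Matrix.mul_assoc Qᵀ]
    exact transpose_mul_transpose_mul_mul_eq_zero_of_mul_eq_zero hQNQ _

theorem stmt1 {k m n p q : ℕ} (M : Matrix (Fin k) (Fin k) ℝ) (hM : M.IsSymm)
    (P : Matrix (Fin m) (Fin k) ℝ) (Q : Matrix (Fin n) (Fin k) ℝ)
    (NP : Matrix (Fin k) (Fin p) ℝ) (NQ : Matrix (Fin k) (Fin q) ℝ)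
    (hPNP : P * NP = 0) (hNPinj : Function.Injective NP.mulVec)
    (hNPspan : ∀ v : Fin k → ℝ, P.mulVec v = 0 → ∃ u, NP.mulVec u = v)
    (hQNQ : Q * NQ = 0) (hNQinj : Function.Injective NQ.mulVec)
    (hNQspan : ∀ v : Fin k → ℝ, Q.mulVec v = 0 → ∃ u, NQ.mulVec u = v)
    (hG : ∃ G : Matrix (Fin n) (Fin m) ℝ, (M + Qᵀ * G * P + Pᵀ * Gᵀ * Q).NegDef) :
    (NPᵀ * M * NP).NegDef ∧ (NQᵀ * M * NQ).NegDef :=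
  stmt1_general M P Q NP NQ hPNP hNPinj hQNQ hNQinj hG
end

section
/- (Constraint LMI) Let P be a symmetric positive definite n×n real matrix with Q = P^{-1}, K an m×n real matrix, and u, w positive reals. If the block matrix [[-Q, -Q K^T], [-K Q, -(u²/w²) I_m]] is negative definite, then for every x ∈ ℝ^n with x^T P x ≤ w², the Euclidean norm of K x satisfies ‖K x‖² ≤ u². -/
open Matrix

/-!
Write `c = u² / w²` and `M = [[Q, Q Kᵀ], [K Q, c I]]`, which is positive definite. Testing `M` on
`v = (-P x, c⁻¹ K x)` kills the second block of `M v`, and what remains is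
`vᵀ M v = xᵀ P x - c⁻¹ ‖K x‖²` (the Schur complement of `c I`, conjugated by `P`). Hence
`‖K x‖² ≤ c · xᵀ P x ≤ c w² = u²`.
-/

namespace Matrix

variable {n m : Type*} [Fintype n] [Fintype m] [DecidableEq n] [DecidableEq m]
  {P Q : Matrix n n ℝ} (K : Matrix m n ℝ) {c : ℝ}

theorem fromBlocks_mulVec_sumElim_neg_mulVec (hQP : Q * P = 1) (hc : c ≠ 0) (x : n → ℝ) :
    fromBlocks Q (Q * Kᵀ) (K * Q) (c • 1) *ᵥ Sum.elim (-(P *ᵥ x)) (c⁻¹ • K *ᵥ x) =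
      Sum.elim (-x + c⁻¹ • Q *ᵥ (Kᵀ *ᵥ (K *ᵥ x))) 0 := by
  have hQPx : Q *ᵥ (P *ᵥ x) = x := by rw [mulVec_mulVec, hQP, one_mulVec]
  simp only [fromBlocks_mulVec, Sum.elim_comp_inl, Sum.elim_comp_inr, ← mulVec_mulVec, mulVec_neg,
    mulVec_smul, smul_mulVec, one_mulVec, hQPx, smul_smul, inv_mul_cancel₀ hc, one_smul,
    neg_add_cancel]

theorem dotProduct_fromBlocks_mulVec_sumElim_neg_mulVec (hQP : Q * P = 1) (hP : P.IsSymm)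
    (hc : c ≠ 0) (x : n → ℝ) :
    Sum.elim (-(P *ᵥ x)) (c⁻¹ • K *ᵥ x) ⬝ᵥ
        fromBlocks Q (Q * Kᵀ) (K * Q) (c • 1) *ᵥ Sum.elim (-(P *ᵥ x)) (c⁻¹ • K *ᵥ x) =
      x ⬝ᵥ P *ᵥ x - c⁻¹ * (K *ᵥ x ⬝ᵥ K *ᵥ x) := by
  have hPQ : ∀ y, P *ᵥ x ⬝ᵥ Q *ᵥ y = x ⬝ᵥ y := fun y => by
    rw [← vecMul_transpose, hP.eq, ← dotProduct_mulVec, mulVec_mulVec, mul_eq_one_comm.mp hQP,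
      one_mulVec]
  have hKK : x ⬝ᵥ Kᵀ *ᵥ (K *ᵥ x) = K *ᵥ x ⬝ᵥ K *ᵥ x := by
    rw [mulVec_transpose, dotProduct_comm, ← dotProduct_mulVec]
  rw [fromBlocks_mulVec_sumElim_neg_mulVec K hQP hc, sumElim_dotProduct_sumElim, dotProduct_zero,
    add_zero, neg_dotProduct, dotProduct_add, dotProduct_smul, hPQ, hKK, dotProduct_neg,
    dotProduct_comm (P *ᵥ x), smul_eq_mul]
  ring

theorem dotProduct_mulVec_le_of_posSemidef_fromBlocks (hQP : Q * P = 1) (hP : P.IsSymm)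
    (hc : 0 < c) (hM : (fromBlocks Q (Q * Kᵀ) (K * Q) (c • 1)).PosSemidef) (x : n → ℝ) :
    K *ᵥ x ⬝ᵥ K *ᵥ x ≤ c * (x ⬝ᵥ P *ᵥ x) := by
  have := hM.dotProduct_mulVec_nonneg (Sum.elim (-(P *ᵥ x)) (c⁻¹ • K *ᵥ x))
  rw [star_trivial, dotProduct_fromBlocks_mulVec_sumElim_neg_mulVec K hQP hP hc.ne'] at this
  rwa [sub_nonneg, inv_mul_le_iff₀ hc] at this

end Matrix

theorem stmt9 {n m : ℕ} (P : Matrix (Fin n) (Fin n) ℝ) (hP : P.PosDef) (hPs : P.IsSymm)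
    (Q : Matrix (Fin n) (Fin n) ℝ) (hQ : Q = P⁻¹)
    (K : Matrix (Fin m) (Fin n) ℝ) (u w : ℝ) (hu : 0 < u) (hw : 0 < w)
    (hLMI : (Matrix.fromBlocks (-Q) (-(Q * Kᵀ)) (-(K * Q))
        ((-(u ^ 2 / w ^ 2)) • (1 : Matrix (Fin m) (Fin m) ℝ))).NegDef) :
    ∀ x : Fin n → ℝ, x ⬝ᵥ P.mulVec x ≤ w ^ 2 →
      (K.mulVec x) ⬝ᵥ (K.mulVec x) ≤ u ^ 2 := by
  intro x hx
  have hc : 0 < u ^ 2 / w ^ 2 := by positivity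
  have hQP : Q * P = 1 := hQ ▸ nonsing_inv_mul P (isUnit_iff_isUnit_det P |>.mp hP.isUnit)
  have hM : (fromBlocks Q (Q * Kᵀ) (K * Q) ((u ^ 2 / w ^ 2) • 1)).PosSemidef := by
    simpa [NegDef, fromBlocks_neg] using hLMI.posSemidef
  calc K *ᵥ x ⬝ᵥ K *ᵥ x ≤ u ^ 2 / w ^ 2 * (x ⬝ᵥ P *ᵥ x) :=
        dotProduct_mulVec_le_of_posSemidef_fromBlocks K hQP hPs hc hM x
    _ ≤ u ^ 2 / w ^ 2 * w ^ 2 := by gcongr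
    _ = u ^ 2 := div_mul_cancel₀ _ (by positivity)
end

section
/- (Bounded real dissipation, algebraic form) Let A_cl, B_cl, C_cl, D_cl be real matrices of compatible sizes, Q a symmetric positive definite n×n matrix, and γ > 0. If the block matrix [[A_cl Q + Q A_cl^T, B_cl, Q C_cl^T], [B_cl^T, -γ I, D_cl^T], [C_cl Q, D_cl, -γ I]] is negative definite, then with P = Q^{-1}, for all x ∈ ℝ^n and w ∈ ℝ^m with (x, w) ≠ 0: 2 x^T P (A_cl x + B_cl w) + γ^{-1} ‖C_cl x + D_cl w‖² - γ ‖w‖² < 0. -/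
/-!
Write `y = Q⁻¹ x` and `z = γ⁻¹ (C x + D w)`. Since `Q` is symmetric, the quadratic form of the
block matrix at `(y, w, z)` is `2 xᵀ P (A x + B w) - γ ‖w‖² + γ⁻¹ ‖C x + D w‖²`: the choice of `z`
makes the last block row vanish (Schur complement), and substituting `x = Q y` is the congruence
with `diag(P, I, I)`. Negative definiteness at the nonzero vector `(y, w, z)` gives the claim.
-/

open Matrix

namespace Matrix

variable {ι κ : Type*} [Fintype ι] [Fintype κ]

theorem sumElim_dotProduct_fromBlocks_transpose_mulVec {R : Type*} [CommRing R]
    (S : Matrix ι ι R) (B : Matrix ι κ R) (T : Matrix κ κ R) (y : ι → R) (w : κ → R) :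
    (y ⊕ᵥ w) ⬝ᵥ fromBlocks S B Bᵀ T *ᵥ (y ⊕ᵥ w)
      = y ⬝ᵥ S *ᵥ y + 2 * (y ⬝ᵥ B *ᵥ w) + w ⬝ᵥ T *ᵥ w := by
  have hB : w ⬝ᵥ Bᵀ *ᵥ y = y ⬝ᵥ B *ᵥ w := by
    rw [mulVec_transpose, dotProduct_mulVec, dotProduct_comm]
  rw [fromBlocks_mulVec, sumElim_dotProduct_sumElim, Sum.elim_comp_inl, Sum.elim_comp_inr,
    dotProduct_add, dotProduct_add, hB]
  ring

theorem dotProduct_mul_add_mul_transpose_mulVec {R : Type*} [CommRing R]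
    {Q : Matrix ι ι R} (hQ : Q.IsSymm) (A : Matrix ι ι R) (y : ι → R) :
    y ⬝ᵥ (A * Q + Q * Aᵀ) *ᵥ y = 2 * (y ⬝ᵥ A *ᵥ Q *ᵥ y) := by
  have hsym : y ⬝ᵥ (Q * Aᵀ) *ᵥ y = y ⬝ᵥ A *ᵥ Q *ᵥ y := by
    rw [← mulVec_mulVec, dotProduct_mulVec, ← mulVec_transpose, hQ.eq, dotProduct_comm,
      mulVec_transpose, ← dotProduct_mulVec]
  rw [add_mulVec, dotProduct_add, hsym, ← mulVec_mulVec]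
  ring

variable [DecidableEq κ]

theorem sumElim_dotProduct_fromBlocks_mulVec_sumElim_schur {𝕜 : Type*} [Field 𝕜]
    (N : Matrix ι ι 𝕜) (K : Matrix κ ι 𝕜) (γ : 𝕜) (u : ι → 𝕜) :
    (u ⊕ᵥ γ⁻¹ • K *ᵥ u) ⬝ᵥ fromBlocks N Kᵀ K (-γ • 1) *ᵥ (u ⊕ᵥ γ⁻¹ • K *ᵥ u)
      = u ⬝ᵥ N *ᵥ u + γ⁻¹ * (K *ᵥ u ⬝ᵥ K *ᵥ u) := by
  have hK : u ⬝ᵥ Kᵀ *ᵥ (γ⁻¹ • K *ᵥ u) = γ⁻¹ * (K *ᵥ u ⬝ᵥ K *ᵥ u) := by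
    rw [mulVec_transpose, dotProduct_comm, ← dotProduct_mulVec, smul_dotProduct, smul_eq_mul]
  rw [fromBlocks_mulVec, sumElim_dotProduct_sumElim, Sum.elim_comp_inl, Sum.elim_comp_inr,
    dotProduct_add, hK, smul_mulVec, one_mulVec]
  simp only [smul_smul, dotProduct_add, dotProduct_smul, smul_dotProduct, smul_eq_mul]
  have hγ : γ⁻¹ * γ * γ⁻¹ = γ⁻¹ := by simpa using mul_inv_mul_cancel γ⁻¹
  linear_combination -(K *ᵥ u ⬝ᵥ K *ᵥ u) * hγ

theorem NegDef.add_inv_mul_dotProduct_neg {N : Matrix ι ι ℝ} {K : Matrix κ ι ℝ} {γ : ℝ}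
    (h : (fromBlocks N Kᵀ K (-γ • 1)).NegDef) {u : ι → ℝ} (hu : u ≠ 0) :
    u ⬝ᵥ N *ᵥ u + γ⁻¹ * (K *ᵥ u ⬝ᵥ K *ᵥ u) < 0 := by
  have hv : (u ⊕ᵥ γ⁻¹ • K *ᵥ u) ≠ 0 := fun h0 =>
    hu (funext fun i => by simpa using congrFun h0 (Sum.inl i))
  have := h.dotProduct_mulVec_pos hv
  rw [star_trivial, neg_mulVec, dotProduct_neg,
    sumElim_dotProduct_fromBlocks_mulVec_sumElim_schur] at this
  linarith

end Matrix

theorem stmt10_general {n m p : ℕ} (Acl : Matrix (Fin n) (Fin n) ℝ) (Bcl : Matrix (Fin n) (Fin m) ℝ)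
    (Ccl : Matrix (Fin p) (Fin n) ℝ) (Dcl : Matrix (Fin p) (Fin m) ℝ)
    (Q : Matrix (Fin n) (Fin n) ℝ) (hQ : Q.PosDef) (hQs : Q.IsSymm) (γ : ℝ)
    (hLMI : (Matrix.fromBlocks
        (Matrix.fromBlocks (Acl * Q + Q * Aclᵀ) Bcl Bclᵀ
          ((-γ) • (1 : Matrix (Fin m) (Fin m) ℝ)))
        (Matrix.fromRows (Q * Cclᵀ) Dclᵀ)
        (Matrix.fromCols (Ccl * Q) Dcl)
        ((-γ) • (1 : Matrix (Fin p) (Fin p) ℝ))).NegDef) :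
    ∀ (x : Fin n → ℝ) (w : Fin m → ℝ), ¬(x = 0 ∧ w = 0) →
      2 * (x ⬝ᵥ Q⁻¹.mulVec (Acl.mulVec x + Bcl.mulVec w))
        + γ⁻¹ * ((Ccl.mulVec x + Dcl.mulVec w) ⬝ᵥ (Ccl.mulVec x + Dcl.mulVec w))
        - γ * (w ⬝ᵥ w) < 0 := by
  intro x w hxw
  set y := Q⁻¹ *ᵥ x
  have hQy : Q *ᵥ y = x := by
    rw [mulVec_mulVec, mul_nonsing_inv Q ((isUnit_iff_isUnit_det Q).1 hQ.isUnit), one_mulVec]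
  have hP (v : Fin n → ℝ) : x ⬝ᵥ Q⁻¹ *ᵥ v = y ⬝ᵥ v := by
    rw [dotProduct_mulVec, ← mulVec_transpose, transpose_nonsing_inv, hQs.eq]
  have hu : (y ⊕ᵥ w) ≠ 0 := fun h0 => hxw ⟨by
    rw [← hQy, show y = 0 from funext fun i => congrFun h0 (Sum.inl i), mulVec_zero],
    funext fun i => congrFun h0 (Sum.inr i)⟩
  set K := fromCols (Ccl * Q) Dcl
  have hK : fromRows (Q * Cclᵀ) Dclᵀ = Kᵀ := by
    rw [transpose_fromCols, transpose_mul, hQs.eq]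
  have hKu : K *ᵥ (y ⊕ᵥ w) = Ccl *ᵥ x + Dcl *ᵥ w := by
    rw [fromCols_mulVec_sumElim, ← mulVec_mulVec, hQy]
  have hneg := NegDef.add_inv_mul_dotProduct_neg (hK ▸ hLMI) hu
  rw [sumElim_dotProduct_fromBlocks_transpose_mulVec, dotProduct_mul_add_mul_transpose_mulVec hQs,
    hQy, hKu, smul_mulVec, one_mulVec, dotProduct_smul, smul_eq_mul] at hneg
  rw [hP, dotProduct_add]
  linarith

theorem stmt10 {n m p : ℕ} (Acl : Matrix (Fin n) (Fin n) ℝ) (Bcl : Matrix (Fin n) (Fin m) ℝ)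
    (Ccl : Matrix (Fin p) (Fin n) ℝ) (Dcl : Matrix (Fin p) (Fin m) ℝ)
    (Q : Matrix (Fin n) (Fin n) ℝ) (hQ : Q.PosDef) (hQs : Q.IsSymm) (γ : ℝ) (hγ : 0 < γ)
    (hLMI : (Matrix.fromBlocks
        (Matrix.fromBlocks (Acl * Q + Q * Aclᵀ) Bcl Bclᵀ
          ((-γ) • (1 : Matrix (Fin m) (Fin m) ℝ)))
        (Matrix.fromRows (Q * Cclᵀ) Dclᵀ)
        (Matrix.fromCols (Ccl * Q) Dcl)
        ((-γ) • (1 : Matrix (Fin p) (Fin p) ℝ))).NegDef) :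
    ∀ (x : Fin n → ℝ) (w : Fin m → ℝ), ¬(x = 0 ∧ w = 0) →
      2 * (x ⬝ᵥ Q⁻¹.mulVec (Acl.mulVec x + Bcl.mulVec w))
        + γ⁻¹ * ((Ccl.mulVec x + Dcl.mulVec w) ⬝ᵥ (Ccl.mulVec x + Dcl.mulVec w))
        - γ * (w ⬝ᵥ w) < 0 :=
  stmt10_general Acl Bcl Ccl Dcl Q hQ hQs γ hLMI
end

section
/- (Forward direction of Theorem 1, reduction step) Let A_cl be n×n, B_cl n×m, C_cl p×n, D_cl p×m real matrices, X₁ symmetric positive definite, G₁ an n×n real matrix, γ > 0, and 0 < ε₁ < 1. Define P = [I, 0, 0, -2ε₁ I] (n×(n+m+p+n)) and Q = [A_cl^T - (1/2)I, 0, C_cl^T, I]. Let M be the symmetric block matrix [[X₁, B_cl, 0, -X₁], [B_cl^T, -γI, D_cl^T, 0], [0, D_cl, -γI, 0], [-X₁, 0, 0, 0]]. If M + Q^T G₁ P + P^T G₁^T Q is negative definite, then [[A_cl X₁ + X₁ A_cl^T, B_cl, X₁ C_cl^T], [B_cl^T, -γI, D_cl^T], [C_cl X₁, D_cl, -γI]]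 is negative definite. -/
/-!
With `Q = [K, I]`, the matrix `N = [I; -K]` has full column rank and satisfies `Q N = 0`, so the
congruence `Nᵀ (·) N` kills both terms containing `G₁` and preserves negative definiteness.
What is left, `Nᵀ M N = M₁₁ - M₁₂ K - Kᵀ M₂₁`, is the reduced matrix: the `-(1/2) I` in `Q` is
chosen so that the two copies of `X₁ / 2` cancel the `X₁` in the corner of `M`.
-/

open Matrix

namespace Matrix

section Blocks

variable {R : Type*} {l n k : Type*} [Fintype n] [Fintype k]

theorem fromCols_one_mul_fromRows_one_neg [Ring R] [DecidableEq n] [DecidableEq k]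
    (K : Matrix n k R) :
    fromCols K (1 : Matrix n n R) * fromRows (1 : Matrix k k R) (-K) = 0 := by
  rw [fromCols_mul_fromRows, Matrix.mul_one, Matrix.one_mul, add_neg_cancel]

theorem mulVec_injective_fromRows_one [Semiring R] [DecidableEq n] (K : Matrix l n R) :
    Function.Injective (fromRows (1 : Matrix n n R) K).mulVec := by
  intro v w h
  simpa [fromRows_mulVec] using congrArg (· ∘ Sum.inl) h

theorem fromRows_one_neg_transpose_mul_fromBlocks_mul [Ring R] [DecidableEq k] (A : Matrix k k R)
    (B : Matrix k n R) (C : Matrix n k R) (K : Matrix n k R) :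
    (fromRows (1 : Matrix k k R) (-K))ᵀ * fromBlocks A B C 0 * fromRows (1 : Matrix k k R) (-K) =
      A - B * K - Kᵀ * C := by
  rw [transpose_fromRows, transpose_one, fromCols_mul_fromBlocks, fromCols_mul_fromRows]
  simp only [Matrix.one_mul, Matrix.mul_one, Matrix.mul_zero, add_zero, transpose_neg,
    Matrix.neg_mul, Matrix.mul_neg]
  abel

theorem transpose_mul_add_mul_mul_eq_of_mul_eq_zero [CommRing R] {m : Type*} [Fintype m]
    {Q P : Matrix k n R} {N : Matrix n m R} (hQN : Q * N = 0) (M : Matrix n n R)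
    (G : Matrix k k R) :
    Nᵀ * (M + Qᵀ * G * P + Pᵀ * Gᵀ * Q) * N = Nᵀ * M * N := by
  have hNQ : Nᵀ * Qᵀ = 0 := by rw [← transpose_mul, hQN, transpose_zero]
  simp only [Matrix.mul_add, Matrix.add_mul, ← Matrix.mul_assoc, hNQ, Matrix.zero_mul]
  simp only [Matrix.mul_assoc, hQN, Matrix.mul_zero, add_zero]

end Blocks

theorem NegDef.transpose_mul_mul {n k : Type*} [Fintype n] [Fintype k] {M : Matrix n n ℝ}
    (hM : NegDef M) {N : Matrix n k ℝ} (hN : Function.Injective N.mulVec) :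
    NegDef (Nᵀ * M * N) := by
  have := PosDef.conjTranspose_mul_mul_same hM hN
  rwa [conjTranspose_eq_transpose_of_trivial, Matrix.mul_neg, Matrix.neg_mul] at this

end Matrix

theorem boundedReal_block_eq {n m p : Type*} [Fintype n] [Fintype m] [Fintype p]
    [DecidableEq n] [DecidableEq m] [DecidableEq p]
    (Acl : Matrix n n ℝ) (Bcl : Matrix n m ℝ) (Ccl : Matrix p n ℝ) (Dcl : Matrix p m ℝ)
    (X₁ : Matrix n n ℝ) (γ : ℝ) :
    let K : Matrix n ((n ⊕ m) ⊕ p) ℝ := fromCols (fromCols (Aclᵀ - (1 / 2 : ℝ) • 1) 0) Cclᵀ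
    fromBlocks (fromBlocks X₁ Bcl Bclᵀ ((-γ) • 1)) (fromRows 0 Dclᵀ) (fromCols 0 Dcl) ((-γ) • 1)
        - fromRows (fromRows (-X₁) 0) 0 * K - Kᵀ * fromCols (fromCols (-X₁) 0) 0 =
      fromBlocks (fromBlocks (Acl * X₁ + X₁ * Aclᵀ) Bcl Bclᵀ ((-γ) • 1))
        (fromRows (X₁ * Cclᵀ) Dclᵀ) (fromCols (Ccl * X₁) Dcl) ((-γ) • 1) := by
  intro K
  have hcorner : X₁ + X₁ * (Aclᵀ - (1 / 2 : ℝ) • 1) + (Aclᵀ - (1 / 2 : ℝ) • 1)ᵀ * X₁ =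
      Acl * X₁ + X₁ * Aclᵀ := by
    simp only [transpose_sub, transpose_transpose, transpose_smul, transpose_one, mul_sub, sub_mul,
      Matrix.mul_smul, Matrix.smul_mul, Matrix.mul_one, Matrix.one_mul]
    module
  rw [← hcorner]
  ext (⟨i | i⟩ | i) (⟨j | j⟩ | j) <;>
    simp [K, fromBlocks, fromRows_mul, mul_fromCols, transpose_fromCols]

theorem stmt11_general {n m p : ℕ} (Acl : Matrix (Fin n) (Fin n) ℝ) (Bcl : Matrix (Fin n) (Fin m) ℝ)
    (Ccl : Matrix (Fin p) (Fin n) ℝ) (Dcl : Matrix (Fin p) (Fin m) ℝ)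
    (X₁ : Matrix (Fin n) (Fin n) ℝ)
    (G₁ : Matrix (Fin n) (Fin n) ℝ) (γ : ℝ)
    (P : Matrix (Fin n) (((Fin n ⊕ Fin m) ⊕ Fin p) ⊕ Fin n) ℝ)
    (Q : Matrix (Fin n) (((Fin n ⊕ Fin m) ⊕ Fin p) ⊕ Fin n) ℝ)
    (hQ : Q = Matrix.fromCols
      (Matrix.fromCols (Matrix.fromCols (Aclᵀ - (1 / 2 : ℝ) • 1) 0) Cclᵀ)
      (1 : Matrix (Fin n) (Fin n) ℝ))
    (M : Matrix ((((Fin n ⊕ Fin m) ⊕ Fin p) ⊕ Fin n)) ((((Fin n ⊕ Fin m) ⊕ Fin p) ⊕ Fin n)) ℝ)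
    (hM : M = Matrix.fromBlocks
      (Matrix.fromBlocks
        (Matrix.fromBlocks X₁ Bcl Bclᵀ ((-γ) • (1 : Matrix (Fin m) (Fin m) ℝ)))
        (Matrix.fromRows 0 Dclᵀ)
        (Matrix.fromCols 0 Dcl)
        ((-γ) • (1 : Matrix (Fin p) (Fin p) ℝ)))
      (Matrix.fromRows (Matrix.fromRows (-X₁) 0) 0)
      (Matrix.fromCols (Matrix.fromCols (-X₁) 0) 0)
      0)
    (hDil : (M + Qᵀ * G₁ * P + Pᵀ * G₁ᵀ * Q).NegDef) :
    (Matrix.fromBlocks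
      (Matrix.fromBlocks (Acl * X₁ + X₁ * Aclᵀ) Bcl Bclᵀ
        ((-γ) • (1 : Matrix (Fin m) (Fin m) ℝ)))
      (Matrix.fromRows (X₁ * Cclᵀ) Dclᵀ)
      (Matrix.fromCols (Ccl * X₁) Dcl)
      ((-γ) • (1 : Matrix (Fin p) (Fin p) ℝ))).NegDef := by
  set K : Matrix (Fin n) ((Fin n ⊕ Fin m) ⊕ Fin p) ℝ :=
    fromCols (fromCols (Aclᵀ - (1 / 2 : ℝ) • 1) 0) Cclᵀ
  have hQN : Q * fromRows (1 : Matrix ((Fin n ⊕ Fin m) ⊕ Fin p) _ ℝ) (-K) = 0 := by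
    rw [hQ, fromCols_one_mul_fromRows_one_neg]
  have hCongr := hDil.transpose_mul_mul (mulVec_injective_fromRows_one (-K))
  rwa [transpose_mul_add_mul_mul_eq_of_mul_eq_zero hQN, hM,
    fromRows_one_neg_transpose_mul_fromBlocks_mul, boundedReal_block_eq] at hCongr

theorem stmt11 {n m p : ℕ} (Acl : Matrix (Fin n) (Fin n) ℝ) (Bcl : Matrix (Fin n) (Fin m) ℝ)
    (Ccl : Matrix (Fin p) (Fin n) ℝ) (Dcl : Matrix (Fin p) (Fin m) ℝ)
    (X₁ : Matrix (Fin n) (Fin n) ℝ) (hX₁ : X₁.PosDef) (hX₁s : X₁.IsSymm)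
    (G₁ : Matrix (Fin n) (Fin n) ℝ) (γ : ℝ) (hγ : 0 < γ)
    (ε₁ : ℝ) (hε₁ : 0 < ε₁) (hε₁' : ε₁ < 1)
    (P : Matrix (Fin n) (((Fin n ⊕ Fin m) ⊕ Fin p) ⊕ Fin n) ℝ)
    (hP : P = Matrix.fromCols
      (Matrix.fromCols (Matrix.fromCols (1 : Matrix (Fin n) (Fin n) ℝ) 0) 0)
      ((-(2 * ε₁)) • (1 : Matrix (Fin n) (Fin n) ℝ)))
    (Q : Matrix (Fin n) (((Fin n ⊕ Fin m) ⊕ Fin p) ⊕ Fin n) ℝ)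
    (hQ : Q = Matrix.fromCols
      (Matrix.fromCols (Matrix.fromCols (Aclᵀ - (1 / 2 : ℝ) • 1) 0) Cclᵀ)
      (1 : Matrix (Fin n) (Fin n) ℝ))
    (M : Matrix ((((Fin n ⊕ Fin m) ⊕ Fin p) ⊕ Fin n)) ((((Fin n ⊕ Fin m) ⊕ Fin p) ⊕ Fin n)) ℝ)
    (hM : M = Matrix.fromBlocks
      (Matrix.fromBlocks
        (Matrix.fromBlocks X₁ Bcl Bclᵀ ((-γ) • (1 : Matrix (Fin m) (Fin m) ℝ)))
        (Matrix.fromRows 0 Dclᵀ)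
        (Matrix.fromCols 0 Dcl)
        ((-γ) • (1 : Matrix (Fin p) (Fin p) ℝ)))
      (Matrix.fromRows (Matrix.fromRows (-X₁) 0) 0)
      (Matrix.fromCols (Matrix.fromCols (-X₁) 0) 0)
      0)
    (hDil : (M + Qᵀ * G₁ * P + Pᵀ * G₁ᵀ * Q).NegDef) :
    (Matrix.fromBlocks
      (Matrix.fromBlocks (Acl * X₁ + X₁ * Aclᵀ) Bcl Bclᵀ
        ((-γ) • (1 : Matrix (Fin m) (Fin m) ℝ)))
      (Matrix.fromRows (X₁ * Cclᵀ) Dclᵀ)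
      (Matrix.fromCols (Ccl * X₁) Dcl)
      ((-γ) • (1 : Matrix (Fin p) (Fin p) ℝ))).NegDef :=
  stmt11_general Acl Bcl Ccl Dcl X₁ G₁ γ P Q hQ M hM hDil
end

section
/- (Converse direction of Theorem 1, construction) Let A_cl, B_cl, C_cl, D_cl, γ and symmetric positive definite X₁ be such that M₀ = [[A_cl X₁ + X₁ A_cl^T, B_cl, X₁ C_cl^T], [B_cl^T, -γI, D_cl^T], [C_cl X₁, D_cl, -γI]] is negative definite. Then there exists ε̄ > 0 such that for all 0 < ε₁ ≤ ε̄, the dilated matrix inequality M + Q^T G₁ P + P^T G₁^T Q < 0 holds with the choice G₁ = X₁, where M, P, Q are as in Theorem 1 (with parameter ε₁). -/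
/-!
With `G₁ = X₁` the negated dilated matrix is the block matrix `[[-M₀, 2ε₁N], [2ε₁Nᵀ, 4ε₁X₁]]`,
where `N = [(A_cl - I/2) X₁; 0; C_cl X₁]` (so the paper's `R` is `-2ε₁Nᵀ`). Its Schur complement
with respect to the positive definite block `4ε₁X₁` is `-M₀ - ε₁ N X₁⁻¹ Nᵀ`, and this stays positive
definite for small `ε₁`: `-M₀ ≥ r • 1` for some `r > 0` while `N X₁⁻¹ Nᵀ ≤ K • 1` for some `K`.
-/

open Matrix

section PosDef

open scoped MatrixOrder ComplexOrder

variable {m n 𝕜 : Type*} [Fintype m] [Fintype n] [DecidableEq m] [DecidableEq n] [RCLike 𝕜]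

theorem Matrix.PosDef.exists_pos_forall_sub_smul_posDef {A S : Matrix n n 𝕜} (hA : A.PosDef)
    (hS : S.IsHermitian) :
    ∃ εbar : ℝ, 0 < εbar ∧ ∀ ε : ℝ, 0 < ε → ε ≤ εbar → (A - ε • S).PosDef := by
  cases isEmpty_or_nonempty n
  · exact ⟨1, one_pos, fun _ _ _ => Subsingleton.elim 1 (A - _) ▸ .one⟩
  obtain ⟨r, hr, hrA⟩ : ∃ r > 0, algebraMap ℝ _ r ≤ A :=
    (CFC.exists_pos_algebraMap_le_iff hA.isHermitian).2 fun _ hx =>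
      hA.isStrictlyPositive.spectrum_pos hx
  obtain ⟨K, hK⟩ := S.finite_real_spectrum.bddAbove
  have hSK : S ≤ algebraMap ℝ _ K := le_algebraMap_of_spectrum_le hK hS
  refine ⟨r / (|K| + 1), by positivity, fun ε hε hεr => ?_⟩
  have hεK : ε * K < r :=
    calc ε * K ≤ ε * |K| := by gcongr; exact le_abs_self K
      _ ≤ r / (|K| + 1) * |K| := by gcongr
      _ < r := by rw [div_mul_eq_mul_div, div_lt_iff₀ (by positivity)]; nlinarith [abs_nonneg K]
  have hle : algebraMap ℝ _ (r - ε * K) ≤ A - ε • S := by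
    rw [map_sub, map_mul, ← Algebra.smul_def]
    exact sub_le_sub hrA (smul_le_smul_of_nonneg_left hSK hε.le)
  have hc : (algebraMap ℝ (Matrix n n 𝕜) (r - ε * K)).PosDef := by
    rw [Algebra.algebraMap_eq_smul_one]
    exact PosDef.one.smul (sub_pos.2 hεK)
  simpa using hc.add_posSemidef hle

theorem Matrix.PosDef.fromBlocks₂₂_posDef_iff (A : Matrix m m 𝕜) (B : Matrix m n 𝕜)
    {D : Matrix n n 𝕜} (hD : D.PosDef) :
    (fromBlocks A B Bᴴ D).PosDef ↔ (A - B * D⁻¹ * Bᴴ).PosDef := by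
  let := hD.isUnit.invertible
  simp only [← isStrictlyPositive_iff_posDef, IsStrictlyPositive.iff_of_unital,
    nonneg_iff_posSemidef, PosDef.fromBlocks₂₂ A B hD, isUnit_fromBlocks_iff_of_invertible₂₂,
    invOf_eq_nonsing_inv]

end PosDef

noncomputable section Dilation

variable {n m p : Type*} [Fintype n] [DecidableEq n] [DecidableEq m] [DecidableEq p]

def boundedRealMatrix (A : Matrix n n ℝ) (B : Matrix n m ℝ) (C : Matrix p n ℝ)
    (D : Matrix p m ℝ) (X : Matrix n n ℝ) (γ : ℝ) : Matrix ((n ⊕ m) ⊕ p) ((n ⊕ m) ⊕ p) ℝ :=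
  fromBlocks (fromBlocks (A * X + X * Aᵀ) B Bᵀ ((-γ) • 1)) (fromRows (X * Cᵀ) Dᵀ)
    (fromCols (C * X) D) ((-γ) • 1)

def dilatedMatrix (A : Matrix n n ℝ) (B : Matrix n m ℝ) (C : Matrix p n ℝ)
    (D : Matrix p m ℝ) (X : Matrix n n ℝ) (γ ε : ℝ) :
    Matrix (((n ⊕ m) ⊕ p) ⊕ n) (((n ⊕ m) ⊕ p) ⊕ n) ℝ :=
  let M := fromBlocks
    (fromBlocks (fromBlocks X B Bᵀ ((-γ) • 1)) (fromRows 0 Dᵀ) (fromCols 0 D) ((-γ) • 1))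
    (fromRows (fromRows (-X) 0) 0) (fromCols (fromCols (-X) 0) 0) 0
  let P : Matrix n (((n ⊕ m) ⊕ p) ⊕ n) ℝ := fromCols (fromCols (fromCols 1 0) 0) ((-(2 * ε)) • 1)
  let Q : Matrix n (((n ⊕ m) ⊕ p) ⊕ n) ℝ :=
    fromCols (fromCols (fromCols (Aᵀ - (1 / 2 : ℝ) • 1) 0) Cᵀ) 1
  M + Qᵀ * X * P + Pᵀ * Xᵀ * Q

def dilationCoupling (A : Matrix n n ℝ) (C : Matrix p n ℝ) (X : Matrix n n ℝ) :
    Matrix ((n ⊕ m) ⊕ p) n ℝ :=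
  fromRows (fromRows (A * X - (1 / 2 : ℝ) • X) 0) (C * X)

theorem neg_dilatedMatrix_eq_fromBlocks (A : Matrix n n ℝ) (B : Matrix n m ℝ)
    (C : Matrix p n ℝ) (D : Matrix p m ℝ) {X : Matrix n n ℝ} (hX : X.IsSymm) (γ ε : ℝ) :
    -dilatedMatrix A B C D X γ ε =
      fromBlocks (-boundedRealMatrix A B C D X γ) ((2 * ε) • dilationCoupling A C X)
        ((2 * ε) • dilationCoupling A C X)ᴴ ((4 * ε) • X) := by
  rw [conjTranspose_eq_transpose_of_trivial]
  simp only [dilatedMatrix, dilationCoupling, boundedRealMatrix, hX.eq, transpose_fromCols,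
    transpose_fromRows, transpose_one, transpose_zero, transpose_sub, transpose_smul, transpose_mul,
    fromRows_mul, mul_fromCols, Matrix.mul_one, Matrix.one_mul, Matrix.mul_zero, Matrix.zero_mul,
    Matrix.mul_smul, Matrix.smul_mul, Matrix.sub_mul, Matrix.mul_sub]
  ext (((i | i) | i) | i) (((j | j) | j) | j) <;> simp [mul_comm] <;> ring

theorem negDef_dilatedMatrix_iff [Fintype m] [Fintype p] (A : Matrix n n ℝ) (B : Matrix n m ℝ)
    (C : Matrix p n ℝ) (D : Matrix p m ℝ) {X : Matrix n n ℝ} (hX : X.PosDef) (γ : ℝ) {ε : ℝ}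
    (hε : 0 < ε) :
    (dilatedMatrix A B C D X γ ε).NegDef ↔
      (-boundedRealMatrix A B C D X γ -
        ε • (dilationCoupling A C X * X⁻¹ * (dilationCoupling A C X)ᴴ)).PosDef := by
  set R := dilationCoupling (m := m) A C X
  have hschur : ((2 * ε) • R) * ((4 * ε) • X)⁻¹ * ((2 * ε) • R)ᴴ = ε • (R * X⁻¹ * Rᴴ) := by
    have hXinv : ((4 * ε) • X)⁻¹ = (4 * ε)⁻¹ • X⁻¹ :=
      inv_smul' X (Units.mk0 _ (by positivity)) hX.det_pos.ne'.isUnit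
    simp only [hXinv, conjTranspose_smul, star_trivial, Matrix.smul_mul, Matrix.mul_smul,
      smul_smul]
    congr 1
    field_simp
    norm_num
  rw [NegDef, neg_dilatedMatrix_eq_fromBlocks A B C D (isHermitian_iff_isSymm.1 hX.isHermitian),
    PosDef.fromBlocks₂₂_posDef_iff _ _ (hX.smul (by positivity : 0 < 4 * ε)), hschur]

end Dilation

theorem stmt12_general {n m p : ℕ} (Acl : Matrix (Fin n) (Fin n) ℝ) (Bcl : Matrix (Fin n) (Fin m) ℝ)
    (Ccl : Matrix (Fin p) (Fin n) ℝ) (Dcl : Matrix (Fin p) (Fin m) ℝ)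
    (X₁ : Matrix (Fin n) (Fin n) ℝ) (hX₁ : X₁.PosDef)
    (γ : ℝ)
    (hM₀ : (Matrix.fromBlocks
      (Matrix.fromBlocks (Acl * X₁ + X₁ * Aclᵀ) Bcl Bclᵀ
        ((-γ) • (1 : Matrix (Fin m) (Fin m) ℝ)))
      (Matrix.fromRows (X₁ * Cclᵀ) Dclᵀ)
      (Matrix.fromCols (Ccl * X₁) Dcl)
      ((-γ) • (1 : Matrix (Fin p) (Fin p) ℝ))).NegDef) :
    ∃ εbar : ℝ, 0 < εbar ∧ ∀ ε₁ : ℝ, 0 < ε₁ → ε₁ ≤ εbar →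
      ((Matrix.fromBlocks
          (Matrix.fromBlocks
            (Matrix.fromBlocks X₁ Bcl Bclᵀ ((-γ) • (1 : Matrix (Fin m) (Fin m) ℝ)))
            (Matrix.fromRows 0 Dclᵀ)
            (Matrix.fromCols 0 Dcl)
            ((-γ) • (1 : Matrix (Fin p) (Fin p) ℝ)))
          (Matrix.fromRows (Matrix.fromRows (-X₁) 0) 0)
          (Matrix.fromCols (Matrix.fromCols (-X₁) 0) 0)
          0)
        + (Matrix.fromCols
            (Matrix.fromCols (Matrix.fromCols (Aclᵀ - (1 / 2 : ℝ) • 1) 0) Cclᵀ)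
            (1 : Matrix (Fin n) (Fin n) ℝ))ᵀ * X₁ *
          (Matrix.fromCols
            (Matrix.fromCols (Matrix.fromCols (1 : Matrix (Fin n) (Fin n) ℝ) 0) 0)
            ((-(2 * ε₁)) • (1 : Matrix (Fin n) (Fin n) ℝ)))
        + (Matrix.fromCols
            (Matrix.fromCols (Matrix.fromCols (1 : Matrix (Fin n) (Fin n) ℝ) 0) 0)
            ((-(2 * ε₁)) • (1 : Matrix (Fin n) (Fin n) ℝ)))ᵀ * X₁ᵀ *
          (Matrix.fromCols
            (Matrix.fromCols (Matrix.fromCols (Aclᵀ - (1 / 2 : ℝ) • 1) 0) Cclᵀ)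
            (1 : Matrix (Fin n) (Fin n) ℝ))).NegDef := by
  set R : Matrix ((Fin n ⊕ Fin m) ⊕ Fin p) (Fin n) ℝ := dilationCoupling Acl Ccl X₁
  obtain ⟨εbar, hεbar, hsmall⟩ :=
    PosDef.exists_pos_forall_sub_smul_posDef (S := R * X₁⁻¹ * Rᴴ)
      (hM₀ : (-boundedRealMatrix Acl Bcl Ccl Dcl X₁ γ).PosDef)
      (isHermitian_mul_mul_conjTranspose R hX₁.inv.isHermitian)
  exact ⟨εbar, hεbar, fun ε₁ hε₁ hε₁bar =>
    (negDef_dilatedMatrix_iff Acl Bcl Ccl Dcl hX₁ γ hε₁).2 (hsmall ε₁ hε₁ hε₁bar)⟩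

theorem stmt12 {n m p : ℕ} (Acl : Matrix (Fin n) (Fin n) ℝ) (Bcl : Matrix (Fin n) (Fin m) ℝ)
    (Ccl : Matrix (Fin p) (Fin n) ℝ) (Dcl : Matrix (Fin p) (Fin m) ℝ)
    (X₁ : Matrix (Fin n) (Fin n) ℝ) (hX₁ : X₁.PosDef) (hX₁s : X₁.IsSymm)
    (γ : ℝ) (hγ : 0 < γ)
    (hM₀ : (Matrix.fromBlocks
      (Matrix.fromBlocks (Acl * X₁ + X₁ * Aclᵀ) Bcl Bclᵀ
        ((-γ) • (1 : Matrix (Fin m) (Fin m) ℝ)))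
      (Matrix.fromRows (X₁ * Cclᵀ) Dclᵀ)
      (Matrix.fromCols (Ccl * X₁) Dcl)
      ((-γ) • (1 : Matrix (Fin p) (Fin p) ℝ))).NegDef) :
    ∃ εbar : ℝ, 0 < εbar ∧ ∀ ε₁ : ℝ, 0 < ε₁ → ε₁ ≤ εbar →
      ((Matrix.fromBlocks
          (Matrix.fromBlocks
            (Matrix.fromBlocks X₁ Bcl Bclᵀ ((-γ) • (1 : Matrix (Fin m) (Fin m) ℝ)))
            (Matrix.fromRows 0 Dclᵀ)
            (Matrix.fromCols 0 Dcl)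
            ((-γ) • (1 : Matrix (Fin p) (Fin p) ℝ)))
          (Matrix.fromRows (Matrix.fromRows (-X₁) 0) 0)
          (Matrix.fromCols (Matrix.fromCols (-X₁) 0) 0)
          0)
        + (Matrix.fromCols
            (Matrix.fromCols (Matrix.fromCols (Aclᵀ - (1 / 2 : ℝ) • 1) 0) Cclᵀ)
            (1 : Matrix (Fin n) (Fin n) ℝ))ᵀ * X₁ *
          (Matrix.fromCols
            (Matrix.fromCols (Matrix.fromCols (1 : Matrix (Fin n) (Fin n) ℝ) 0) 0)
            ((-(2 * ε₁)) • (1 : Matrix (Fin n) (Fin n) ℝ)))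
        + (Matrix.fromCols
            (Matrix.fromCols (Matrix.fromCols (1 : Matrix (Fin n) (Fin n) ℝ) 0) 0)
            ((-(2 * ε₁)) • (1 : Matrix (Fin n) (Fin n) ℝ)))ᵀ * X₁ᵀ *
          (Matrix.fromCols
            (Matrix.fromCols (Matrix.fromCols (Aclᵀ - (1 / 2 : ℝ) • 1) 0) Cclᵀ)
            (1 : Matrix (Fin n) (Fin n) ℝ))).NegDef :=
  stmt12_general Acl Bcl Ccl Dcl X₁ hX₁ γ hM₀
end
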